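/- arXiv:math/0503448 — 2 statements merged into one kernel-verified Lean document; each statement's English description precedes it below -/
import Mathlib

section
/- For all matrices A ∈ ℤ_max^{r×n}, B ∈ ℤ_max^{n×p}, and C ∈ ℤ_max^{p×q}, one has vol(Im(ABC)) ≤ vol(Im B). -/
/-- The max-plus matrix–vector product over `ℤ_max = (ℤ ∪ {−∞}, max, +)`:
`(Ax)_i = max_j (A_{ij} + x_j)`. -/
def maxMulVec {m k : ℕ} (A : Matrix (Fin m) (Fin k) (WithBot ℤ))
    (x : Fin k → WithBot ℤ) : Fin m → WithBot ℤ :=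
  fun i => Finset.univ.sup fun j => A i j + x j

/-- The max-plus matrix product: `(AB)_{ij} = max_t (A_{it} + B_{tj})`. -/
def maxMatMul {m k l : ℕ} (A : Matrix (Fin m) (Fin k) (WithBot ℤ))
    (B : Matrix (Fin k) (Fin l) (WithBot ℤ)) : Matrix (Fin m) (Fin l) (WithBot ℤ) :=
  Matrix.of fun i j => Finset.univ.sup fun t => A i t + B t j

/-- `Im A`: the subsemimodule generated by the columns of `A`, i.e. the set of all
max-plus linear combinations `Ay` of the columns of `A`. -/
def ImM {m k : ℕ} (A : Matrix (Fin m) (Fin k) (WithBot ℤ)) : Set (Fin m → WithBot ℤ) :=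
  {v | ∃ y : Fin k → WithBot ℤ, v = maxMulVec A y}

/-- A subsemimodule of `ℤ_max^m`: contains `(−∞,…,−∞)`, is closed under entrywise max,
and under addition of a scalar `λ ∈ ℤ ∪ {−∞}` to all entries. -/
def IsSubsemimodule {m : ℕ} (X : Set (Fin m → WithBot ℤ)) : Prop :=
  (fun _ => ⊥) ∈ X ∧ (∀ x ∈ X, ∀ y ∈ X, x ⊔ y ∈ X) ∧
    ∀ (c : WithBot ℤ), ∀ x ∈ X, (fun i => c + x i) ∈ X

/-- The volume of a subset of `ℤ_max^m`: the cardinality (in `ℕ ∪ {∞}`) of the set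
of its elements `x` with `max_i x_i = 0`. -/
noncomputable def vol {m : ℕ} (X : Set (Fin m → WithBot ℤ)) : ℕ∞ :=
  {x ∈ X | Finset.univ.sup x = (0 : WithBot ℤ)}.encard

/-!
Since `Im(ABC) = A(Im(BC)) ⊆ A(Im B)`, it suffices that the map `x ↦ Ax` does not increase volume.
It commutes with adding a scalar to all entries, so every normalized vector (maximum entry `0`) of
`A(Im B)` is the normalization of `Az` for some normalized `z ∈ Im B`: "normalize `Az`" maps the
normalized vectors of `Im B` onto those of `A(Im B)`.
-/

open Finset

section Normalize

variable {ι : Type*} [Fintype ι]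

lemma sup_const_add (c : WithBot ℤ) (v : ι → WithBot ℤ) :
    (univ.sup fun i => c + v i) = c + univ.sup v :=
  (apply_sup_eq_sup_comp (c + ·) (fun _ _ => (max_add_add_left _ _ _).symm)
    (WithBot.add_bot c)).symm

lemma eq_bot_of_sup_eq_bot {v : ι → WithBot ℤ} (h : univ.sup v = ⊥) : v = fun _ => ⊥ :=
  funext fun i => le_bot_iff.mp (h ▸ le_sup (mem_univ i))

/-- The representative with maximum entry `0` of the max-plus ray through `v`; the vector
`(−∞, …, −∞)` is left unchanged. -/
def normalizeMax (v : ι → WithBot ℤ) : ι → WithBot ℤ :=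
  fun i => ((-(univ.sup v).unbotD 0 : ℤ) : WithBot ℤ) + v i

lemma sup_normalizeMax {v : ι → WithBot ℤ} (h : univ.sup v ≠ ⊥) :
    univ.sup (normalizeMax v) = 0 := by
  obtain ⟨s, hs⟩ := WithBot.ne_bot_iff_exists.mp h
  unfold normalizeMax
  rw [sup_const_add, ← hs, WithBot.unbotD_coe, ← WithBot.coe_add, neg_add_cancel]
  rfl

lemma normalizeMax_of_sup_eq_zero {v : ι → WithBot ℤ} (h : univ.sup v = 0) :
    normalizeMax v = v := by
  funext i
  simp [normalizeMax, h]

lemma normalizeMax_const_add (c : ℤ) (v : ι → WithBot ℤ) :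
    normalizeMax (fun i => (c : WithBot ℤ) + v i) = normalizeMax v := by
  funext i
  by_cases hv : univ.sup v = ⊥
  · simp [normalizeMax, eq_bot_of_sup_eq_bot hv]
  obtain ⟨s, hs⟩ := WithBot.ne_bot_iff_exists.mp hv
  simp only [normalizeMax, sup_const_add, ← hs, ← WithBot.coe_add, WithBot.unbotD_coe, ← add_assoc]
  congr 2
  ring

end Normalize

lemma vol_mono {m : ℕ} {X Y : Set (Fin m → WithBot ℤ)} (h : X ⊆ Y) : vol X ≤ vol Y :=
  Set.encard_le_encard fun _ hx => ⟨h hx.1, hx.2⟩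

theorem vol_image_le {m n : ℕ} {X : Set (Fin n → WithBot ℤ)}
    (hX : ∀ c : ℤ, ∀ x ∈ X, (fun i => (c : WithBot ℤ) + x i) ∈ X)
    {f : (Fin n → WithBot ℤ) → (Fin m → WithBot ℤ)}
    (hf : ∀ (c : WithBot ℤ) x, f (fun i => c + x i) = fun i => c + f x i) :
    vol (f '' X) ≤ vol X := by
  suffices h : {y ∈ f '' X | univ.sup y = 0} ⊆
      (normalizeMax ∘ f) '' {x ∈ X | univ.sup x = 0} from
    (Set.encard_le_encard h).trans (Set.encard_image_le _ _)
  rintro _ ⟨⟨x, hx, rfl⟩, hfx⟩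
  have hx_ne_bot : univ.sup x ≠ ⊥ := by
    intro hbot
    have hf_bot : f x = fun _ => ⊥ := by
      simpa [← eq_bot_of_sup_eq_bot hbot] using hf ⊥ x
    simp [hf_bot] at hfx
  obtain ⟨k, hk⟩ : ∃ k : ℤ, normalizeMax x = fun i => (k : WithBot ℤ) + x i := ⟨_, rfl⟩
  refine ⟨normalizeMax x, ⟨hk ▸ hX k x hx, sup_normalizeMax hx_ne_bot⟩, ?_⟩
  rw [Function.comp_apply, hk, hf, normalizeMax_const_add,
    normalizeMax_of_sup_eq_zero hfx]

section MaxPlusMatrix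

variable {m k l : ℕ}

lemma maxMulVec_const_add (M : Matrix (Fin m) (Fin k) (WithBot ℤ)) (c : WithBot ℤ)
    (y : Fin k → WithBot ℤ) :
    maxMulVec M (fun j => c + y j) = fun i => c + maxMulVec M y i := by
  funext i
  simp only [maxMulVec, ← sup_const_add, add_left_comm c]

lemma const_add_mem_ImM {M : Matrix (Fin m) (Fin k) (WithBot ℤ)} (c : WithBot ℤ)
    {x : Fin m → WithBot ℤ} (hx : x ∈ ImM M) : (fun i => c + x i) ∈ ImM M := by
  obtain ⟨y, rfl⟩ := hx
  exact ⟨fun j => c + y j, (maxMulVec_const_add M c y).symm⟩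

lemma maxMulVec_maxMatMul (M : Matrix (Fin m) (Fin k) (WithBot ℤ))
    (N : Matrix (Fin k) (Fin l) (WithBot ℤ)) (y : Fin l → WithBot ℤ) :
    maxMulVec (maxMatMul M N) y = maxMulVec M (maxMulVec N y) := by
  funext i
  simp only [maxMulVec, maxMatMul, Matrix.of_apply]
  calc (univ.sup fun j => univ.sup (fun t => M i t + N t j) + y j)
      = univ.sup fun j => univ.sup fun t => M i t + (N t j + y j) := by
        simp only [add_comm _ (y _), ← sup_const_add, add_left_comm (y _)]
    _ = univ.sup fun t => univ.sup fun j => M i t + (N t j + y j) := Finset.sup_comm _ _ _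
    _ = univ.sup fun t => M i t + univ.sup fun j => N t j + y j := by
        simp only [sup_const_add]

lemma ImM_maxMatMul (M : Matrix (Fin m) (Fin k) (WithBot ℤ))
    (N : Matrix (Fin k) (Fin l) (WithBot ℤ)) :
    ImM (maxMatMul M N) = maxMulVec M '' ImM N := by
  ext x
  simp only [ImM, Set.mem_image, Set.mem_ofPred_eq, maxMulVec_maxMatMul]
  constructor
  · rintro ⟨y, rfl⟩
    exact ⟨_, ⟨y, rfl⟩, rfl⟩
  · rintro ⟨_, ⟨y, rfl⟩, rfl⟩
    exact ⟨y, rfl⟩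

lemma ImM_maxMatMul_subset (M : Matrix (Fin m) (Fin k) (WithBot ℤ))
    (N : Matrix (Fin k) (Fin l) (WithBot ℤ)) : ImM (maxMatMul M N) ⊆ ImM M := by
  rintro _ ⟨y, rfl⟩
  exact ⟨maxMulVec N y, maxMulVec_maxMatMul M N y⟩

end MaxPlusMatrix

/-- For all matrices `A ∈ ℤ_max^{r×n}`, `B ∈ ℤ_max^{n×p}`, `C ∈ ℤ_max^{p×q}`,
`vol(Im(ABC)) ≤ vol(Im B)`. -/
theorem vol_imABC_le_vol_imB {r n p q : ℕ} (A : Matrix (Fin r) (Fin n) (WithBot ℤ))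
    (B : Matrix (Fin n) (Fin p) (WithBot ℤ)) (C : Matrix (Fin p) (Fin q) (WithBot ℤ)) :
    vol (ImM (maxMatMul (maxMatMul A B) C)) ≤ vol (ImM B) := by
  have hABC : ImM (maxMatMul (maxMatMul A B) C) = maxMulVec A '' ImM (maxMatMul B C) := by
    simp only [ImM_maxMatMul, Set.image_image, maxMulVec_maxMatMul]
  calc vol (ImM (maxMatMul (maxMatMul A B) C))
      ≤ vol (maxMulVec A '' ImM B) :=
        hABC ▸ vol_mono (Set.image_mono (ImM_maxMatMul_subset B C))
    _ ≤ vol (ImM B) :=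
        vol_image_le (fun c _ hx => const_add_mem_ImM c hx) (maxMulVec_const_add A)
end

section
/- Let E ∈ ℤ_max^{n×n} be irreducible, meaning that for all indices i, j there exists k ≥ 1 with (E^k)_{ij} ≠ −∞ (the precedence graph of E is strongly connected), and let K = {x ∈ ℤ_max^n : Ex ≤ x} (entrywise, where Ex is the max-plus matrix–vector product). Then K has finite volume. Moreover, if the max-plus spectral radius of E is strictly positive — equivalently, if there exist i and 1 ≤ k ≤ n with (E^k)_{ii} > 0 — then K = {(−∞,…,−∞)}. -/
/-- The max-plus identity matrix: `0` on the diagonal and `−∞` elsewhere. -/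
def idMax (m : ℕ) : Matrix (Fin m) (Fin m) (WithBot ℤ) :=
  Matrix.of fun i j => if i = j then (0 : WithBot ℤ) else ⊥

/-- Max-plus matrix powers: `E⁰ = I`, `E^{k+1} = E^k · E`. -/
def maxMatPow {m : ℕ} (E : Matrix (Fin m) (Fin m) (WithBot ℤ)) :
    ℕ → Matrix (Fin m) (Fin m) (WithBot ℤ)
  | 0 => idMax m
  | k + 1 => maxMatMul (maxMatPow E k) E

/-! A subfixed point `Ex ≤ x` satisfies `E^k x ≤ x` for every `k`, that is
`(E^k)_{ij} + x_j ≤ x_i`. If `max_i x_i = 0` is attained at `i₀`, irreducibility bounds every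
coordinate from below by the finite number `(E^k)_{j i₀}`, so the normalised subfixed points lie
in a finite box. If `(E^k)_{ii} > 0`, then `(E^k)_{ii} + x_i ≤ x_i` forces `x_i = −∞`, and
irreducibility propagates `−∞` to every coordinate. -/

namespace WithBot

theorem add_finsetSup {α ι : Type*} [AddCommMonoid α] [LinearOrder α] [AddLeftMono α]
    (s : Finset ι) (f : ι → WithBot α) (a : WithBot α) :
    a + s.sup f = s.sup fun i => a + f i :=
  Finset.apply_sup_eq_sup_comp_of_linearOrder (a + ·) (monotone_id.const_add a) (add_bot a)

theorem finsetSup_add {α ι : Type*} [AddCommMonoid α] [LinearOrder α] [AddLeftMono α]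
    (s : Finset ι) (f : ι → WithBot α) (a : WithBot α) :
    s.sup f + a = s.sup fun i => f i + a := by
  simp_rw [add_comm _ a, add_finsetSup]

theorem eq_bot_of_add_le_self {α : Type*} [AddCommMonoid α] [PartialOrder α]
    [IsOrderedCancelAddMonoid α] {c y : WithBot α} (hc : 0 < c) (h : c + y ≤ y) : y = ⊥ := by
  induction y with
  | bot => rfl
  | coe b =>
    lift c to α using hc.ne_bot
    rw [← coe_add, coe_le_coe, add_le_iff_nonpos_left] at h
    exact absurd (coe_pos.1 hc) h.not_gt

theorem finite_Icc_of_ne_bot {α : Type*} [Preorder α] [LocallyFiniteOrder α] {a : WithBot α}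
    (ha : a ≠ ⊥) (b : WithBot α) : (Set.Icc a b).Finite := by
  lift a to α using ha
  induction b with
  | bot => rw [Set.Icc_eq_empty (not_coe_le_bot a)]; exact Set.finite_empty
  | coe b => rw [Icc_coe]; exact (Set.finite_Icc a b).image _

end WithBot

section MaxPlus

variable {m n p : ℕ}

theorem maxMulVec_maxMatMul_s19 (A : Matrix (Fin m) (Fin n) (WithBot ℤ))
    (B : Matrix (Fin n) (Fin p) (WithBot ℤ)) (x : Fin p → WithBot ℤ) :
    maxMulVec (maxMatMul A B) x = maxMulVec A (maxMulVec B x) := by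
  funext i
  simp only [maxMulVec, maxMatMul, Matrix.of_apply, WithBot.finsetSup_add,
    WithBot.add_finsetSup, add_assoc]
  exact Finset.sup_comm _ _ _

theorem maxMulVec_idMax (x : Fin m → WithBot ℤ) : maxMulVec (idMax m) x = x := by
  funext i
  simp [maxMulVec, idMax, ite_add, Finset.sup_ite, Finset.filter_eq]

theorem maxMulVec_mono (A : Matrix (Fin m) (Fin n) (WithBot ℤ)) : Monotone (maxMulVec A) :=
  fun _ _ hxy _ => Finset.sup_mono_fun fun j _ => add_le_add_right (hxy j) _

variable {E : Matrix (Fin m) (Fin m) (WithBot ℤ)} {x : Fin m → WithBot ℤ}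

theorem maxMulVec_maxMatPow_le (hx : maxMulVec E x ≤ x) :
    ∀ k, maxMulVec (maxMatPow E k) x ≤ x
  | 0 => (maxMulVec_idMax x).le
  | k + 1 => by
    rw [maxMatPow, maxMulVec_maxMatMul_s19]
    exact (maxMulVec_mono _ hx).trans (maxMulVec_maxMatPow_le hx k)

theorem maxMatPow_add_le (hx : maxMulVec E x ≤ x) (k : ℕ) (i j : Fin m) :
    maxMatPow E k i j + x j ≤ x i :=
  (Finset.le_sup (f := fun j => maxMatPow E k i j + x j) (Finset.mem_univ j)).trans
    (maxMulVec_maxMatPow_le hx k i)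

theorem eq_bot_of_maxMatPow_ne_bot (hx : maxMulVec E x ≤ x) {k : ℕ} {i j : Fin m}
    (hEij : maxMatPow E k i j ≠ ⊥) (hxi : x i = ⊥) : x j = ⊥ := by
  have := maxMatPow_add_le hx k i j
  rw [hxi, le_bot_iff, WithBot.add_eq_bot] at this
  exact this.resolve_left hEij

theorem eq_bot_of_pos_maxMatPow_diag (hx : maxMulVec E x ≤ x) {k : ℕ} {i : Fin m}
    (hpos : 0 < maxMatPow E k i i) : x i = ⊥ :=
  WithBot.eq_bot_of_add_le_self hpos (maxMatPow_add_le hx k i i)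

end MaxPlus

/-- Let `E ∈ ℤ_max^{n×n}` be irreducible (for all `i, j` there is `k ≥ 1` with
`(E^k)_{ij} ≠ −∞`), and let `K = {x ∈ ℤ_max^n : Ex ≤ x}` (entrywise). Then `K`
has finite volume; moreover, if the max-plus spectral radius of `E` is strictly
positive, i.e. `(E^k)_{ii} > 0` for some `i` and some `1 ≤ k ≤ n`, then
`K = {(−∞,…,−∞)}`. -/
theorem subfixed_points_finite_volume {n : ℕ} (E : Matrix (Fin n) (Fin n) (WithBot ℤ))
    (hirr : ∀ i j : Fin n, ∃ k : ℕ, 1 ≤ k ∧ maxMatPow E k i j ≠ ⊥) :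
    vol {x : Fin n → WithBot ℤ | ∀ i, maxMulVec E x i ≤ x i} ≠ ⊤ ∧
    ((∃ (i : Fin n) (k : ℕ), 1 ≤ k ∧ k ≤ n ∧ (0 : WithBot ℤ) < maxMatPow E k i i) →
      {x : Fin n → WithBot ℤ | ∀ i, maxMulVec E x i ≤ x i} =
        {fun _ => (⊥ : WithBot ℤ)}) := by
  choose kk _ hkk using hirr
  refine ⟨?_, ?_⟩
  · have hbound : {x | (∀ i, maxMulVec E x i ≤ x i) ∧ Finset.univ.sup x = (0 : WithBot ℤ)} ⊆
        ⋃ i, Set.univ.pi fun j => Set.Icc (maxMatPow E (kk j i) j i) 0 := by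
      rintro x ⟨hx, hsup⟩
      have hne : (Finset.univ : Finset (Fin n)).Nonempty :=
        Finset.nonempty_iff_ne_empty.2 fun h => by simp [h] at hsup
      obtain ⟨i, -, hi⟩ := Finset.exists_mem_eq_sup _ hne x
      refine Set.mem_iUnion.2 ⟨i, fun j _ => ⟨?_, hsup ▸ Finset.le_sup (Finset.mem_univ j)⟩⟩
      simpa [← hi, hsup] using maxMatPow_add_le hx (kk j i) j i
    rw [vol, Set.encard_ne_top_iff]
    exact (Set.finite_iUnion fun i =>
      Set.Finite.pi fun j => WithBot.finite_Icc_of_ne_bot (hkk j i) 0).subset hbound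
  · rintro ⟨i, k, -, -, hpos⟩
    refine Set.eq_singleton_iff_unique_mem.2 ⟨fun j => by simp [maxMulVec], fun x hx => ?_⟩
    funext j
    exact eq_bot_of_maxMatPow_ne_bot hx (hkk i j) (eq_bot_of_pos_maxMatPow_diag hx hpos)
end
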